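/- Let Ψ_min(λ) := √(1+λ²) / ((√(1+λ²)+λ)^{2/3} + (√(1+λ²)−λ)^{2/3} − 1) − 1 for λ ∈ ℝ. Then Ψ_min is an even function, Ψ_min(λ) > 0 for λ ≠ 0, and there exist constants c, C > 0 such that for all λ ∈ ℝ, c·min{λ², |λ|^{1/3}} ≤ Ψ_min(λ) ≤ C·min{λ², |λ|^{1/3}}. -/

import Mathlib

/-- The universal shape function near a small local minimum. -/
noncomputable def PsiMin (l : ℝ) : ℝ :=
  Real.sqrt (1 + l^2) /
    ((Real.sqrt (1 + l^2) + l) ^ ((2:ℝ)/3) +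
     (Real.sqrt (1 + l^2) - l) ^ ((2:ℝ)/3) - 1) - 1

/-!
Substituting `l = sinh (3 t)` turns `√(1 + l²) ± l` into `exp (± 3 t)`, and the triple-angle
identity `cosh (3 t) = cosh t · (2 cosh (2 t) - 1)` collapses `PsiMin` to `cosh t - 1`. This makes
evenness and positivity immediate. For the two-sided bound put `u = exp t ≥ 1`, so that
`PsiMin l = (u - 1)² / (2 u)` and `1 + l ≤ u³ ≤ 1 + 2 l` for `l ≥ 0`: for `l ≤ 1` this gives
`u - 1 ≍ l`, and for `l ≥ 1` it gives `u ≍ l^{1/3}`.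
-/

open Real

lemma cosh_three_mul_div (t : ℝ) :
    cosh (3 * t) / (exp (2 * t) + exp (-(2 * t)) - 1) = cosh t := by
  have hpow (n : ℕ) : exp (n * t) = exp t ^ n := exp_nat_mul t n
  have h2 : exp (2 * t) = exp t ^ 2 := mod_cast hpow 2
  have h3 : exp (3 * t) = exp t ^ 3 := mod_cast hpow 3
  have he := exp_pos t
  have hden : 0 < exp t ^ 4 - exp t ^ 2 + 1 := by nlinarith [sq_nonneg (exp t ^ 2 - 1)]
  rw [cosh_eq, cosh_eq, exp_neg, exp_neg, exp_neg, h2, h3,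
    div_eq_iff (by field_simp; exact (div_pos (by linarith) (by positivity)).ne')]
  field_simp
  ring

lemma cosh_sub_one_eq (t : ℝ) : cosh t - 1 = (exp t - 1) ^ 2 / (2 * exp t) := by
  rw [cosh_eq, exp_neg]
  field_simp
  ring

theorem psiMin_eq_cosh (l : ℝ) : PsiMin l = cosh (arsinh l / 3) - 1 := by
  have hplus : √(1 + l ^ 2) + l = exp (arsinh l) := by rw [exp_arsinh, add_comm]
  have hminus : √(1 + l ^ 2) - l = exp (-arsinh l) := by
    rw [← arsinh_neg, exp_arsinh, neg_sq, neg_add_eq_sub]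
  rw [PsiMin, hplus, hminus, ← cosh_arsinh, ← exp_mul, ← exp_mul,
    ← cosh_three_mul_div (arsinh l / 3)]
  ring_nf

theorem psiMin_neg (l : ℝ) : PsiMin (-l) = PsiMin l := by
  rw [psiMin_eq_cosh, psiMin_eq_cosh, arsinh_neg, neg_div, cosh_neg]

theorem psiMin_abs (l : ℝ) : PsiMin |l| = PsiMin l := by
  rcases abs_choice l with h | h <;> rw [h]
  exact psiMin_neg l

theorem psiMin_pos {l : ℝ} (hl : l ≠ 0) : 0 < PsiMin l := by
  rw [psiMin_eq_cosh, sub_pos, one_lt_cosh]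
  simpa [arsinh_eq_zero_iff] using hl

lemma min_sq_rpow_one_third_of_le_one {l : ℝ} (hl : 0 ≤ l) (hl1 : l ≤ 1) :
    min (l ^ 2) (l ^ ((1:ℝ)/3)) = l ^ 2 :=
  min_eq_left <| by
    simpa using rpow_le_rpow_of_exponent_ge' hl hl1 (by norm_num) (by norm_num : (1:ℝ)/3 ≤ 2)

lemma min_sq_rpow_one_third_of_one_le {l : ℝ} (hl1 : 1 ≤ l) :
    min (l ^ 2) (l ^ ((1:ℝ)/3)) = l ^ ((1:ℝ)/3) :=
  min_eq_right <| (rpow_le_self_of_one_le hl1 (by norm_num)).trans (by nlinarith)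

lemma rpow_one_third_pow_three {l : ℝ} (hl : 0 ≤ l) : (l ^ ((1:ℝ)/3)) ^ 3 = l := by
  simpa using rpow_inv_natCast_pow hl three_ne_zero

section CubeSandwich

variable {l u : ℝ} (hu : 0 < u) (hlow : 1 + l ≤ u ^ 3) (hup : u ^ 3 ≤ 1 + 2 * l)
include hu hlow hup

lemma sub_one_sq_div_bounds_of_le_one (hl : 0 ≤ l) (hl1 : l ≤ 1) :
    l ^ 2 / 196 ≤ (u - 1) ^ 2 / (2 * u) ∧ (u - 1) ^ 2 / (2 * u) ≤ l ^ 2 := by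
  have hu1 : 1 ≤ u := le_of_pow_le_pow_left₀ three_ne_zero hu.le (by linarith)
  have hu2 : u ≤ 2 := le_of_pow_le_pow_left₀ three_ne_zero zero_le_two (by linarith)
  have hfactor : u ^ 3 - 1 = (u - 1) * (u ^ 2 + u + 1) := by ring
  have hgap_le : u - 1 ≤ l := by nlinarith
  have hgap_ge : l / 7 ≤ u - 1 := by
    nlinarith [mul_le_mul_of_nonneg_left (show u ^ 2 + u + 1 ≤ 7 by nlinarith) (sub_nonneg.2 hu1)]
  constructor
  · rw [le_div_iff₀ (by positivity)]
    nlinarith [mul_le_mul hgap_ge hgap_ge (by positivity) (by linarith)]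
  · rw [div_le_iff₀ (by positivity)]
    nlinarith [mul_le_mul hgap_le hgap_le (by linarith) hl]

lemma sub_one_sq_div_bounds_of_one_le {w : ℝ} (hw : 0 ≤ w) (hwl : w ^ 3 = l) (hl1 : 1 ≤ l) :
    w / 196 ≤ (u - 1) ^ 2 / (2 * u) ∧ (u - 1) ^ 2 / (2 * u) ≤ w := by
  have hwu : w ≤ u := le_of_pow_le_pow_left₀ three_ne_zero hu.le (by linarith)
  have hu2w : u ≤ 2 * w := le_of_pow_le_pow_left₀ three_ne_zero (by positivity) (by nlinarith)
  have hu_ge : 5 / 4 ≤ u := le_of_pow_le_pow_left₀ three_ne_zero hu.le (by linarith)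
  have hgap : u / 5 ≤ u - 1 := by linarith
  constructor
  · rw [le_div_iff₀ (by positivity)]
    nlinarith [mul_le_mul hgap hgap (by positivity) (by linarith)]
  · rw [div_le_iff₀ (by positivity)]
    nlinarith

end CubeSandwich

theorem psiMin_bounds_of_nonneg {l : ℝ} (hl : 0 ≤ l) :
    1 / 196 * min (l ^ 2) (l ^ ((1:ℝ)/3)) ≤ PsiMin l ∧
      PsiMin l ≤ min (l ^ 2) (l ^ ((1:ℝ)/3)) := by
  rw [psiMin_eq_cosh, cosh_sub_one_eq]
  set u := exp (arsinh l / 3)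
  have hu3 : u ^ 3 = l + √(1 + l ^ 2) := by
    rw [← exp_arsinh, ← exp_nat_mul]
    ring_nf
  have hsqrt_ge : 1 ≤ √(1 + l ^ 2) := one_le_sqrt.2 (by nlinarith)
  have hsqrt_le : √(1 + l ^ 2) ≤ 1 + l := sqrt_le_iff.2 ⟨by linarith, by nlinarith⟩
  have hlow : 1 + l ≤ u ^ 3 := by linarith
  have hup : u ^ 3 ≤ 1 + 2 * l := by linarith
  rcases le_total l 1 with hl1 | hl1
  · rw [min_sq_rpow_one_third_of_le_one hl hl1]
    obtain ⟨hge, hle⟩ := sub_one_sq_div_bounds_of_le_one (exp_pos _) hlow hup hl hl1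
    exact ⟨by linarith, hle⟩
  · rw [min_sq_rpow_one_third_of_one_le hl1]
    obtain ⟨hge, hle⟩ := sub_one_sq_div_bounds_of_one_le (exp_pos _) hlow hup
      (rpow_nonneg hl _) (rpow_one_third_pow_three hl) hl1
    exact ⟨by linarith, hle⟩

theorem psiMin_bounds (l : ℝ) :
    1 / 196 * min (l ^ 2) (|l| ^ ((1:ℝ)/3)) ≤ PsiMin l ∧
      PsiMin l ≤ min (l ^ 2) (|l| ^ ((1:ℝ)/3)) := by
  rw [← psiMin_abs, ← sq_abs]
  exact psiMin_bounds_of_nonneg (abs_nonneg l)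

theorem stmt_5 :
    (∀ l : ℝ, PsiMin (-l) = PsiMin l) ∧
    (∀ l : ℝ, l ≠ 0 → 0 < PsiMin l) ∧
    (∃ c C : ℝ, 0 < c ∧ 0 < C ∧ ∀ l : ℝ,
      c * min (l ^ 2) (|l| ^ ((1:ℝ)/3)) ≤ PsiMin l ∧
      PsiMin l ≤ C * min (l ^ 2) (|l| ^ ((1:ℝ)/3))) :=
  ⟨psiMin_neg, fun _ => psiMin_pos, 1 / 196, 1, by norm_num, one_pos,
    fun l => by simpa only [one_mul] using psiMin_bounds l⟩
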